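/- Let ω < 0 be fixed, h(s) = ½(s - s ln(-s)) for s < 0, and f_ω(z) = h(ω + z) - h(ω) - h'(ω)z for z ∈ (-∞, -ω). Then the Legendre transform f_ω*(s) = sup_{z < -ω} (sz - f_ω(z)) equals -½ ω (e^{-2s} + 2s - 1) for all s ∈ ℝ, with the supremum attained at z = ω(e^{-2s} - 1). -/
import Mathlib


noncomputable section

/-- `h(s) = ½(s - s ln(-s))` (for `s < 0`). -/
def Casimirh (s : ℝ) : ℝ := (1 / 2) * (s - s * Real.log (-s))

/-- `f_ω(z) = h(ω + z) - h(ω) - h'(ω)z`, with `h'(ω) = -½ ln(-ω)`. -/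
def fLeg (ω z : ℝ) : ℝ := Casimirh (ω + z) - Casimirh ω - (-(1 / 2) * Real.log (-ω)) * z

end

/-- For `ω < 0`, the Legendre transform `f_ω*(s) = sup_{z < -ω} (sz - f_ω(z))` equals
`-½ ω (e^{-2s} + 2s - 1)` for all `s ∈ ℝ`, with the supremum attained at
`z = ω(e^{-2s} - 1)`. -/
theorem stmt14 (ω : ℝ) (hω : ω < 0) (s : ℝ) :
    IsGreatest ((fun z => s * z - fLeg ω z) '' Set.Iio (-ω))
      (-(1 / 2) * ω * (Real.exp (-(2 * s)) + 2 * s - 1)) ∧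
    ω * (Real.exp (-(2 * s)) - 1) ∈ Set.Iio (-ω) ∧
    s * (ω * (Real.exp (-(2 * s)) - 1)) - fLeg ω (ω * (Real.exp (-(2 * s)) - 1))
      = -(1 / 2) * ω * (Real.exp (-(2 * s)) + 2 * s - 1) := by
  have he : (0:ℝ) < Real.exp (-(2 * s)) := Real.exp_pos _
  set E := Real.exp (-(2 * s)) with hE
  have hmem : ω * (E - 1) ∈ Set.Iio (-ω) := by
    simp only [Set.mem_Iio]
    nlinarith
  have hlog : Real.log (-(ω + ω * (E - 1))) = Real.log (-ω) + -(2 * s) := by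
    have : -(ω + ω * (E - 1)) = (-ω) * E := by ring
    rw [this, Real.log_mul (by linarith) (by linarith), hE, Real.log_exp]
  have heq : s * (ω * (E - 1)) - fLeg ω (ω * (E - 1))
      = -(1 / 2) * ω * (E + 2 * s - 1) := by
    simp only [fLeg, Casimirh, hlog]
    ring
  refine ⟨⟨⟨_, hmem, heq⟩, ?_⟩, hmem, heq⟩
  rintro y ⟨z, hz, rfl⟩
  simp only [Set.mem_Iio] at hz
  set u := -(ω + z) with hu
  have hu0 : 0 < u := by simp only [hu]; linarith
  have hu0' : 0 < -ω * E := by nlinarith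
  have key : u * (Real.log (-ω * E) - Real.log u) ≤ -ω * E - u := by
    have h1 : Real.log (-ω * E / u) ≤ -ω * E / u - 1 :=
      Real.log_le_sub_one_of_pos (div_pos hu0' hu0)
    rw [Real.log_div (ne_of_gt hu0') (ne_of_gt hu0)] at h1
    have h2 := mul_le_mul_of_nonneg_left h1 hu0.le
    have h3 : u * (-ω * E / u) = -ω * E := by field_simp
    nlinarith
  have hlogE : Real.log (-ω * E) = Real.log (-ω) + -(2 * s) := by
    rw [Real.log_mul (by linarith) (by linarith), hE, Real.log_exp]
  have hlu : Real.log (-(ω + z)) = Real.log u := by rw [hu]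
  simp only [fLeg, Casimirh, hlu]
  rw [hlogE] at key
  have hz' : ω + z = -u := by simp [hu]
  nlinarith [key]
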